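/- Let G be a finite outerplanar simple graph with maximum degree Δ = k where k ∈ {3,4}. Then ind(G²) ≤ 2k−2; that is, every nonempty induced subgraph of G² contains a vertex of degree at most 2k−2 in that subgraph. -/

import Mathlib

open SimpleGraph

/-- The square `G²` of a simple graph `G`: two distinct vertices are adjacent iff
they are adjacent in `G` or have a common neighbor in `G`. -/
def SimpleGraph.square {V : Type*} (G : SimpleGraph V) : SimpleGraph V where
  Adj u v := u ≠ v ∧ (G.Adj u v ∨ ∃ w, G.Adj u w ∧ G.Adj w v)
  symm := ⟨by
    rintro u v ⟨hne, h | ⟨w, h1, h2⟩⟩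
    · exact ⟨hne.symm, Or.inl h.symm⟩
    · exact ⟨hne.symm, Or.inr ⟨w, h2.symm, h1.symm⟩⟩⟩
  loopless := ⟨fun u h => h.1 rfl⟩

/-- A finite simple graph is outerplanar iff it has a one-page book embedding:
a linear order (here realized by an injection into `ℕ`) on its vertices such that
no two edges "cross", i.e. there are no vertices `a < c < b < d` with both
`{a,b}` and `{c,d}` edges. -/
def SimpleGraph.IsOuterplanar {V : Type*} (G : SimpleGraph V) : Prop :=
  ∃ f : V → ℕ, Function.Injective f ∧
    ∀ a b c d : V, G.Adj a b → G.Adj c d →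
      ¬(f a < f c ∧ f c < f b ∧ f b < f d)

/-- The degree of a vertex, as the cardinality of its neighbor set. -/
noncomputable def SimpleGraph.deg {V : Type*} (G : SimpleGraph V) (v : V) : ℕ :=
  (G.neighborSet v).ncard

/-- The maximum degree `Δ` of a finite graph. -/
noncomputable def SimpleGraph.maxDeg {V : Type*} [Fintype V] (G : SimpleGraph V) : ℕ :=
  Finset.univ.sup fun v => G.deg v

/-- The degree of `v` inside the subgraph of `G` induced by the vertex set `s`. -/
noncomputable def SimpleGraph.degIn {V : Type*} (G : SimpleGraph V) (s : Finset V) (v : V) : ℕ :=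
  {u | u ∈ s ∧ G.Adj v u}.ncard

/-- The inductiveness (degeneracy) of a finite graph: the maximum over all nonempty
induced subgraphs of the minimum degree of the induced subgraph. -/
noncomputable def SimpleGraph.inductiveness {V : Type*} [Fintype V]
    (G : SimpleGraph V) : ℕ :=
  Finset.univ.powerset.sup fun s =>
    if h : s.Nonempty then s.inf' h (G.degIn s) else 0

/-- A graph is chordal if every cycle of length at least 4 has a chord: two
vertices of the cycle, adjacent in the graph, whose joining edge is not an edge
of the cycle (i.e. they are nonconsecutive on the cycle). -/
def SimpleGraph.IsChordal {V : Type*} (G : SimpleGraph V) : Prop :=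
  ∀ ⦃v : V⦄ (w : G.Walk v v), w.IsCycle → 4 ≤ w.length →
    ∃ a b : V, a ∈ w.support ∧ b ∈ w.support ∧ G.Adj a b ∧ s(a, b) ∉ w.edges

/-- A finite graph is biconnected if it has at least 3 vertices, is connected,
and deleting any single vertex leaves it connected. -/
def SimpleGraph.Biconnected {V : Type*} [Fintype V] (G : SimpleGraph V) : Prop :=
  3 ≤ Fintype.card V ∧ G.Connected ∧
    ∀ v : V, ((G.induce {u | u ≠ v}).Connected)

/-- `G` is `k`-choosable: for every assignment of lists of exactly `k` colors to
the vertices there is a proper coloring choosing each vertex's color from its list. -/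
def SimpleGraph.Choosable {V : Type*} (G : SimpleGraph V) (k : ℕ) : Prop :=
  ∀ L : V → Finset ℕ, (∀ v, (L v).card = k) →
    ∃ c : V → ℕ, (∀ v, c v ∈ L v) ∧ ∀ u v, G.Adj u v → c u ≠ c v

/-- `F₄`: the 6-vertex graph obtained from the triangle `0 1 2` by adding, for each
edge of the triangle, a new vertex (`3 = y₀₁`, `4 = y₁₂`, `5 = y₀₂`) adjacent to
exactly the two endpoints of that edge. -/
def F4 : SimpleGraph (Fin 6) :=
  SimpleGraph.fromEdgeSet
    {s(0, 1), s(1, 2), s(0, 2), s(3, 0), s(3, 1), s(4, 1), s(4, 2), s(5, 0), s(5, 2)}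

/-- `F₆`: the 12-vertex graph obtained from `F₄` by adding, for each of the six edges
`xᵢyᵢⱼ` between a triangle vertex and an added vertex, a new vertex adjacent to
exactly the two endpoints of that edge (vertices `6,…,11`). -/
def F6 : SimpleGraph (Fin 12) :=
  SimpleGraph.fromEdgeSet
    {s(0, 1), s(1, 2), s(0, 2), s(3, 0), s(3, 1), s(4, 1), s(4, 2), s(5, 0), s(5, 2),
     s(6, 0), s(6, 3), s(7, 1), s(7, 3), s(8, 1), s(8, 4), s(9, 2), s(9, 4),
     s(10, 0), s(10, 5), s(11, 2), s(11, 5)}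

/-- The rigid ladder `RL n`.  For even `n = 2k` it has vertices `u₁,…,u_k,v₁,…,v_k`
and edges `uᵢvᵢ, uᵢuᵢ₊₁, uᵢvᵢ₊₁, vᵢvᵢ₊₁` (for `1 ≤ i ≤ k-1`) together with `u_k v_k`;
for odd `n` it is `RL (n+1)` with the vertex `u_{(n+1)/2}` deleted.  We use the zigzag
labelling `vᵢ ↦ 2i - 2`, `uᵢ ↦ 2i - 1` (under which deleting `u_{(n+1)/2} = n` from
`RL (n+1)` leaves exactly the labels `0,…,n-1`); under this labelling two vertices are
adjacent iff their labels differ by exactly 1 or 2. -/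
def rigidLadder (n : ℕ) : SimpleGraph (Fin n) where
  Adj a b := a ≠ b ∧ Nat.dist a.val b.val ≤ 2
  symm := ⟨by
    rintro a b ⟨h1, h2⟩
    exact ⟨h1.symm, by rwa [Nat.dist_comm]⟩⟩
  loopless := ⟨fun a h => h.1 rfl⟩

/-!
Fix `k ≥ 3` and argue by induction on `G`. Deleting an edge `xy` with `x ∉ s` is harmless as long
as every path of length two through it between vertices of `s` is short-cut by an edge. A vertex of
`s` of degree at most one has at most `k` neighbours in `G²`, and a leaf outside `s` can be cut
off. Otherwise every non-isolated vertex has degree at least two, and in a one-page book embedding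
take an edge `ab` of least length that has non-isolated vertices under it. By non-crossing and
minimality these vertices form a path `a x₁ x₂ ⋯ b` of vertices of degree two. Its start is a
triangle `a x₁ b`, a quadrilateral `a x₁ x₂ b` or a path `a x₁ x₂ x₃ c`; in each case either some
`xᵢ ∈ s` has at most `2k - 2` neighbours in `G²[s]`, or an edge at `x₁` can be deleted.
-/

namespace SimpleGraph

variable {V : Type*} {G H : SimpleGraph V} {s : Finset V} {f : V → ℕ} {k : ℕ}
  {a b c u v w x y y' : V}

theorem ncard_neighborSet_sdiff_singleton (h : G.Adj v w) :
    (G.neighborSet v \ {w}).ncard = G.deg v - 1 :=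
  Set.ncard_sdiff_singleton_of_mem h

theorem IsOuterplanar.mono (h : G ≤ H) (hH : H.IsOuterplanar) : G.IsOuterplanar := by
  obtain ⟨f, hf, hcross⟩ := hH
  exact ⟨f, hf, fun a b c d hab hcd => hcross a b c d (h hab) (h hcd)⟩

theorem deleteEdges_singleton_lt (h : G.Adj x y) : G.deleteEdges {s(x, y)} < G :=
  lt_of_le_of_ne (deleteEdges_le _) fun heq =>
    Set.disjoint_singleton_right.mp (deleteEdges_eq_self.mp heq) h

theorem adj_of_neighborSet_eq_pair (hx : G.neighborSet x = {u, v}) : G.Adj x u ∧ G.Adj x v :=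
  ⟨show u ∈ G.neighborSet x by simp [hx], show v ∈ G.neighborSet x by simp [hx]⟩

theorem eq_or_eq_of_neighborSet_eq_pair (hx : G.neighborSet x = {u, v}) (hy : G.Adj x y) :
    y = u ∨ y = v :=
  show y ∈ ({u, v} : Set V) from hx ▸ hy

theorem square_neighborSet_subset_of_neighborSet_eq_pair (hx : G.neighborSet x = {u, v}) :
    G.square.neighborSet x ⊆ {u, v} ∪ (G.neighborSet u \ {x}) ∪ (G.neighborSet v \ {x}) := by
  rintro y ⟨hne, hxy | ⟨w, hxw, hwy⟩⟩
  · exact Or.inl (Or.inl (hx ▸ hxy))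
  · have hw : w ∈ ({u, v} : Set V) := hx ▸ hxw
    rcases hw with rfl | rfl
    · exact Or.inl (Or.inr ⟨hwy, hne.symm⟩)
    · exact Or.inr ⟨hwy, hne.symm⟩

def IsSquareRemovable (G : SimpleGraph V) (s : Finset V) (x y : V) : Prop :=
  G.Adj x y ∧ ∀ u ∈ s, ∀ v ∈ s, G.square.Adj u v → (G.deleteEdges {s(x, y)}).square.Adj u v

theorem isSquareRemovable_of_notMem (hxy : G.Adj x y) (hx : x ∉ s)
    (hy : y ∈ s → ∀ z ∈ s, G.Adj x z → z ≠ y → G.Adj y z) : G.IsSquareRemovable s x y := by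
  refine ⟨hxy, fun u hu v hv ⟨hne, huv⟩ => ⟨hne, ?_⟩⟩
  have hxu : x ≠ u := by rintro rfl; exact hx hu
  have hxv : x ≠ v := by rintro rfl; exact hx hv
  have keep {p q : V} (hpq : G.Adj p q) (hp : p ≠ x) (hq : q ≠ x) :
      (G.deleteEdges {s(x, y)}).Adj p q := by
    refine deleteEdges_adj.mpr ⟨hpq, ?_⟩
    aesop
  rcases huv with huv | ⟨w, huw, hwv⟩
  · exact Or.inl (keep huv hxu.symm hxv.symm)
  -- the path `u - w - v` can only use the deleted edge as `y - x`, and then `yv` is an edge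
  by_cases hw : w = x
  · subst hw
    by_cases hu' : u = y
    · subst hu'; exact Or.inl (keep (hy hu v hv hwv (Ne.symm hne)) hxu.symm hxv.symm)
    by_cases hv' : v = y
    · subst hv'; exact Or.inl (keep (hy hv u hu huw.symm hne).symm hxu.symm hxv.symm)
    refine Or.inr ⟨w, deleteEdges_adj.mpr ⟨huw, ?_⟩, deleteEdges_adj.mpr ⟨hwv, ?_⟩⟩ <;> aesop
  · exact Or.inr ⟨w, keep huw hxu.symm hw, keep hwv hw hxv.symm⟩

theorem isSquareRemovable_of_neighborSet_eq_singleton (hx : G.neighborSet x = {y})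
    (hxs : x ∉ s) : G.IsSquareRemovable s x y :=
  isSquareRemovable_of_notMem (show y ∈ G.neighborSet x by simp [hx]) hxs
    fun _ z _ hxz hzy => absurd (show z ∈ G.neighborSet x from hxz) (by simp [hx, hzy])

def IsSquareReducible (G : SimpleGraph V) (s : Finset V) (k : ℕ) : Prop :=
  (∃ v ∈ s, G.square.degIn s v ≤ 2 * k - 2) ∨ ∃ x y, G.IsSquareRemovable s x y

section Finite

variable [Finite V]

theorem deg_mono (h : G ≤ H) (v : V) : G.deg v ≤ H.deg v :=
  Set.ncard_le_ncard fun _ hu => h hu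

theorem mem_support_iff_deg_pos : v ∈ G.support ↔ 0 < G.deg v := by
  rw [deg, Set.ncard_pos, mem_support]
  rfl

theorem degIn_le_deg : G.degIn s v ≤ G.deg v :=
  Set.ncard_le_ncard fun _ hu => hu.2

theorem degIn_mono (h : ∀ u ∈ s, G.Adj v u → H.Adj v u) : G.degIn s v ≤ H.degIn s v :=
  Set.ncard_le_ncard fun u hu => ⟨hu.1, h u hu.1 hu.2⟩

theorem IsSquareRemovable.degIn_square_le (h : G.IsSquareRemovable s x y)
    (hv : v ∈ s) : G.square.degIn s v ≤ (G.deleteEdges {s(x, y)}).square.degIn s v :=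
  degIn_mono fun u hu => h.2 v hv u hu

theorem square_deg_le_of_deg_le_one (hdeg : ∀ w, G.deg w ≤ k) (hv : G.deg v ≤ 1) :
    G.square.deg v ≤ k := by
  rcases Nat.le_one_iff_eq_zero_or_eq_one.mp hv with hv | hv
  · have hN : G.neighborSet v = ∅ := (Set.ncard_eq_zero).mp hv
    have hN2 : G.square.neighborSet v = ∅ :=
      Set.eq_empty_of_forall_notMem fun y ⟨_, h⟩ => by
        rcases h with h | ⟨w, h, _⟩
        · exact hN.subset (show y ∈ G.neighborSet v from h)
        · exact hN.subset (show w ∈ G.neighborSet v from h)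
    simp [deg, hN2]
  obtain ⟨y, hy⟩ := Set.ncard_eq_one.mp hv
  have hvy : G.Adj y v := (hy ▸ rfl : y ∈ G.neighborSet v).symm
  calc G.square.deg v ≤ ({y} ∪ (G.neighborSet y \ {v})).ncard := by
        refine Set.ncard_le_ncard ((square_neighborSet_subset_of_neighborSet_eq_pair
          (by rw [hy, Set.pair_eq_singleton])).trans ?_)
        simp
    _ ≤ 1 + (G.deg y - 1) := by
        grw [Set.ncard_union_le, Set.ncard_singleton, ncard_neighborSet_sdiff_singleton hvy]
    _ ≤ k := by
        have := mem_support_iff_deg_pos.mp ⟨v, hvy⟩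
        have := hdeg y
        omega

theorem square_deg_le_of_triangle (hx : G.neighborSet x = {a, b}) (hab : G.Adj a b) :
    G.square.deg x ≤ (G.deg a - 1) + (G.deg b - 1) := by
  obtain ⟨hxa, hxb⟩ := adj_of_neighborSet_eq_pair hx
  calc G.square.deg x ≤ ((G.neighborSet a \ {x}) ∪ (G.neighborSet b \ {x})).ncard := by
        refine Set.ncard_le_ncard ((square_neighborSet_subset_of_neighborSet_eq_pair hx).trans ?_)
        have : a ∈ G.neighborSet b \ {x} := ⟨hab.symm, hxa.ne'⟩
        have : b ∈ G.neighborSet a \ {x} := ⟨hab, hxb.ne'⟩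
        grind
    _ ≤ _ := by
        grw [Set.ncard_union_le, ncard_neighborSet_sdiff_singleton hxa.symm,
          ncard_neighborSet_sdiff_singleton hxb.symm]

theorem square_deg_le_of_quadrilateral {x₁ x₂ : V} (h₁ : G.neighborSet x₁ = {a, x₂})
    (h₂ : G.neighborSet x₂ = {x₁, b}) (hab : G.Adj a b) : G.square.deg x₁ ≤ G.deg a + 1 := by
  have hx₁a := (adj_of_neighborSet_eq_pair h₁).1
  calc G.square.deg x₁ ≤ ({a, x₂} ∪ (G.neighborSet a \ {x₁})).ncard := by
        refine Set.ncard_le_ncard ((square_neighborSet_subset_of_neighborSet_eq_pair h₁).trans ?_)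
        have : G.neighborSet x₂ \ {x₁} ⊆ G.neighborSet a \ {x₁} := by
          rw [h₂]
          rintro y ⟨rfl | rfl, hy⟩
          exacts [absurd rfl hy, ⟨hab, hy⟩]
        grind
    _ ≤ 2 + (G.deg a - 1) := by
        grw [Set.ncard_union_le, Set.ncard_insert_le, Set.ncard_singleton,
          ncard_neighborSet_sdiff_singleton hx₁a.symm]
    _ ≤ G.deg a + 1 := by have := mem_support_iff_deg_pos.mp ⟨x₁, hx₁a.symm⟩; omega

theorem square_degIn_le_of_path {x₁ x₂ x₃ : V} (h₁ : G.neighborSet x₁ = {a, x₂})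
    (h₂ : G.neighborSet x₂ = {x₁, x₃}) (hx₂ : x₂ ∉ s) : G.square.degIn s x₁ ≤ G.deg a + 1 := by
  have hx₁a := (adj_of_neighborSet_eq_pair h₁).1
  calc G.square.degIn s x₁ ≤ ({a, x₃} ∪ (G.neighborSet a \ {x₁})).ncard := by
        refine Set.ncard_le_ncard fun y ⟨hys, hy⟩ => ?_
        have hyx₂ : y ≠ x₂ := by rintro rfl; exact hx₂ hys
        have := square_neighborSet_subset_of_neighborSet_eq_pair h₁ hy
        rw [h₂] at this
        grind
    _ ≤ 2 + (G.deg a - 1) := by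
        grw [Set.ncard_union_le, Set.ncard_insert_le, Set.ncard_singleton,
          ncard_neighborSet_sdiff_singleton hx₁a.symm]
    _ ≤ G.deg a + 1 := by have := mem_support_iff_deg_pos.mp ⟨x₁, hx₁a.symm⟩; omega

theorem square_deg_le_four_of_path {x₁ x₂ x₃ : V} (h₁ : G.neighborSet x₁ = {a, x₂})
    (h₂ : G.neighborSet x₂ = {x₁, x₃}) (h₃ : G.neighborSet x₃ = {x₂, c}) :
    G.square.deg x₂ ≤ 4 := by
  calc G.square.deg x₂ ≤ ({x₁, x₃, a, c} : Set V).ncard := by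
        refine Set.ncard_le_ncard ((square_neighborSet_subset_of_neighborSet_eq_pair h₂).trans ?_)
        rw [h₁, h₃]
        grind
    _ ≤ 4 := by
        grw [Set.ncard_insert_le, Set.ncard_insert_le, Set.ncard_insert_le, Set.ncard_singleton]

theorem isSquareReducible_of_triangle (hdeg : ∀ w, G.deg w ≤ k) (hx : G.neighborSet x = {a, b})
    (hab : G.Adj a b) :
    G.IsSquareReducible s k := by
  by_cases hxs : x ∈ s
  · refine Or.inl ⟨x, hxs, degIn_le_deg.trans ((square_deg_le_of_triangle hx hab).trans ?_)⟩
    have := hdeg a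
    have := hdeg b
    omega
  · have hxa := (adj_of_neighborSet_eq_pair hx).1
    refine Or.inr ⟨x, a, isSquareRemovable_of_notMem hxa hxs fun _ z _ hxz hza => ?_⟩
    obtain rfl := (eq_or_eq_of_neighborSet_eq_pair hx hxz).resolve_left hza
    exact hab

theorem isSquareReducible_of_quadrilateral (hk : 3 ≤ k) (hdeg : ∀ w, G.deg w ≤ k) {x₁ x₂ : V}
    (h₁ : G.neighborSet x₁ = {a, x₂}) (h₂ : G.neighborSet x₂ = {x₁, b}) (hab : G.Adj a b) :
    G.IsSquareReducible s k := by
  by_cases hx₁ : x₁ ∈ s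
  · refine Or.inl ⟨x₁, hx₁, degIn_le_deg.trans
      ((square_deg_le_of_quadrilateral h₁ h₂ hab).trans ?_)⟩
    have := hdeg a
    omega
  by_cases hx₂ : x₂ ∈ s
  · refine Or.inl ⟨x₂, hx₂, degIn_le_deg.trans ((square_deg_le_of_quadrilateral
      (h₂.trans (Set.pair_comm _ _)) (h₁.trans (Set.pair_comm _ _)) hab.symm).trans ?_)⟩
    have := hdeg b
    omega
  · exact Or.inr ⟨x₁, x₂, isSquareRemovable_of_notMem (adj_of_neighborSet_eq_pair h₁).2 hx₁
      fun h => absurd h hx₂⟩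

theorem isSquareReducible_of_path (hk : 3 ≤ k) (hdeg : ∀ w, G.deg w ≤ k) {x₁ x₂ x₃ : V}
    (h₁ : G.neighborSet x₁ = {a, x₂}) (h₂ : G.neighborSet x₂ = {x₁, x₃})
    (h₃ : G.neighborSet x₃ = {x₂, c}) :
    G.IsSquareReducible s k := by
  by_cases hx₂ : x₂ ∈ s
  · exact Or.inl ⟨x₂, hx₂, degIn_le_deg.trans
      ((square_deg_le_four_of_path h₁ h₂ h₃).trans (by omega))⟩
  by_cases hx₁ : x₁ ∈ s
  · refine Or.inl ⟨x₁, hx₁, (square_degIn_le_of_path h₁ h₂ hx₂).trans ?_⟩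
    have := hdeg a
    omega
  by_cases hx₃ : x₃ ∈ s
  · refine Or.inl ⟨x₃, hx₃, (square_degIn_le_of_path (h₃.trans (Set.pair_comm _ _))
      (h₂.trans (Set.pair_comm _ _)) hx₂).trans ?_⟩
    have := hdeg c
    omega
  · exact Or.inr ⟨x₁, x₂, isSquareRemovable_of_notMem (adj_of_neighborSet_eq_pair h₁).2 hx₁
      fun h => absurd h hx₂⟩

end Finite

def IsBookEmbedding (G : SimpleGraph V) (f : V → ℕ) : Prop :=
  Function.Injective f ∧
    ∀ a b c d : V, G.Adj a b → G.Adj c d → ¬(f a < f c ∧ f c < f b ∧ f b < f d)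

def IsInside (G : SimpleGraph V) (f : V → ℕ) (a b x : V) : Prop :=
  x ∈ G.support ∧ f a < f x ∧ f x < f b

structure IsInnermostEdge (G : SimpleGraph V) (f : V → ℕ) (a b : V) : Prop where
  adj : G.Adj a b
  exists_isInside : ∃ x, G.IsInside f a b x
  not_isInside : ∀ p q, G.Adj p q → f q - f p < f b - f a → ∀ z, ¬G.IsInside f p q z

theorem exists_isInnermostEdge [Finite V] (hf : Function.Injective f)
    (h2 : ∀ v ∈ G.support, 2 ≤ G.deg v) (hne : G.support.Nonempty) :
    ∃ a b, G.IsInnermostEdge f a b := by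
  obtain ⟨t, ht, htmax⟩ := Set.exists_max_image G.support f (Set.toFinite _) hne
  obtain ⟨p, hp, q, hq, hpq⟩ := (Set.one_lt_ncard (Set.toFinite _)).mp (h2 t ht)
  have below {y : V} (hy : G.Adj t y) : f y < f t :=
    (htmax y ⟨t, hy.symm⟩).lt_of_ne (hf.ne hy.ne')
  -- the last non-isolated vertex `t` has two earlier neighbours, and the edge from `t` to the
  -- first of them has the other one inside
  have hspan : ∃ e : V × V, G.Adj e.1 e.2 ∧ ∃ x, G.IsInside f e.1 e.2 x := by
    rcases (hf.ne hpq).lt_or_gt with h | h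
    · exact ⟨(p, t), hp.symm, q, ⟨t, hq.symm⟩, h, below hq⟩
    · exact ⟨(q, t), hq.symm, p, ⟨t, hp.symm⟩, h, below hp⟩
  obtain ⟨⟨a, b⟩, ⟨hab, hin⟩, hmin⟩ := Set.exists_min_image
    {e : V × V | G.Adj e.1 e.2 ∧ ∃ x, G.IsInside f e.1 e.2 x} (fun e => f e.2 - f e.1)
    (Set.toFinite _) hspan
  exact ⟨a, b, hab, hin, fun p q hpq hlt z hz => (hmin (p, q) ⟨hpq, z, hz⟩).not_gt hlt⟩

namespace IsInnermostEdge

theorem le_of_adj (h : G.IsInnermostEdge f a b) (hf : G.IsBookEmbedding f)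
    (hx : G.IsInside f a b x) (hxy : G.Adj x y) : f a ≤ f y ∧ f y ≤ f b := by
  obtain ⟨-, hax, hxb⟩ := hx
  constructor
  · by_contra hya
    exact hf.2 y x a b hxy.symm h.adj ⟨by omega, hax, hxb⟩
  · by_contra hby
    exact hf.2 a b x y h.adj hxy ⟨hax, hxb, by omega⟩

theorem eq_or_eq_or_isInside_of_adj (h : G.IsInnermostEdge f a b) (hf : G.IsBookEmbedding f)
    (hx : G.IsInside f a b x) (hxy : G.Adj x y) :
    y = a ∨ y = b ∨ G.IsInside f a b y := by
  obtain ⟨hay, hyb⟩ := h.le_of_adj hf hx hxy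
  rcases hay.eq_or_lt with hay | hay
  · exact Or.inl (hf.1 hay).symm
  rcases hyb.eq_or_lt with hyb | hyb
  · exact Or.inr (Or.inl (hf.1 hyb))
  · exact Or.inr (Or.inr ⟨⟨x, hxy.symm⟩, hay, hyb⟩)

theorem not_isInside_of_adj (h : G.IsInnermostEdge f a b) (hf : G.IsBookEmbedding f)
    (hx : G.IsInside f a b x) (hxy : G.Adj x y) (z : V) :
    ¬G.IsInside f x y z ∧ ¬G.IsInside f y x z := by
  have := h.le_of_adj hf hx hxy
  obtain ⟨-, hax, hxb⟩ := hx
  exact ⟨h.not_isInside x y hxy (by omega) z, h.not_isInside y x hxy.symm (by omega) z⟩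

theorem eq_of_adj_of_lt (h : G.IsInnermostEdge f a b) (hf : G.IsBookEmbedding f)
    (hx : G.IsInside f a b x) (hy : G.Adj x y) (hy' : G.Adj x y')
    (hxy : f x < f y) (hxy' : f x < f y') : y = y' := by
  rcases lt_trichotomy (f y) (f y') with hlt | heq | hlt
  · exact absurd ⟨⟨x, hy.symm⟩, hxy, hlt⟩ (h.not_isInside_of_adj hf hx hy' y).1
  · exact hf.1 heq
  · exact absurd ⟨⟨x, hy'.symm⟩, hxy', hlt⟩ (h.not_isInside_of_adj hf hx hy y').1

theorem eq_of_adj_of_gt (h : G.IsInnermostEdge f a b) (hf : G.IsBookEmbedding f)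
    (hx : G.IsInside f a b x) (hy : G.Adj x y) (hy' : G.Adj x y')
    (hyx : f y < f x) (hy'x : f y' < f x) : y = y' := by
  rcases lt_trichotomy (f y) (f y') with hlt | heq | hlt
  · exact absurd ⟨⟨x, hy'.symm⟩, hlt, hy'x⟩ (h.not_isInside_of_adj hf hx hy y').2
  · exact hf.1 heq
  · exact absurd ⟨⟨x, hy.symm⟩, hlt, hyx⟩ (h.not_isInside_of_adj hf hx hy' y).2

theorem exists_neighborSet_eq_pair [Finite V] (h : G.IsInnermostEdge f a b)
    (hf : G.IsBookEmbedding f) (h2 : ∀ v ∈ G.support, 2 ≤ G.deg v)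
    (hx : G.IsInside f a b x) : ∃ u v, f u < f x ∧ f x < f v ∧ G.neighborSet x = {u, v} := by
  have side {y : V} (hy : G.Adj x y) : f y < f x ∨ f x < f y := (hf.1.ne hy.ne').lt_or_gt
  have pair {u v : V} (hu : G.Adj x u) (hv : G.Adj x v) (hux : f u < f x) (hxv : f x < f v) :
      G.neighborSet x = {u, v} := by
    ext y
    refine ⟨fun hy => ?_, by rintro (rfl | rfl) <;> assumption⟩
    rcases side hy with hyx | hxy
    · exact Or.inl (h.eq_of_adj_of_gt hf hx hy hu hyx hux)
    · exact Or.inr (h.eq_of_adj_of_lt hf hx hy hv hxy hxv)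
  obtain ⟨p, hp, q, hq, hpq⟩ := (Set.one_lt_ncard (Set.toFinite _)).mp (h2 x hx.1)
  rcases side hp with hp' | hp' <;> rcases side hq with hq' | hq'
  · exact absurd (h.eq_of_adj_of_gt hf hx hp hq hp' hq') hpq
  · exact ⟨p, q, hp', hq', pair hp hq hp' hq'⟩
  · exact ⟨q, p, hq', hp', pair hq hp hq' hp'⟩
  · exact absurd (h.eq_of_adj_of_lt hf hx hp hq hp' hq') hpq

theorem exists_neighborSet_eq_pair_of_adj [Finite V] (h : G.IsInnermostEdge f a b)
    (hf : G.IsBookEmbedding f) (h2 : ∀ v ∈ G.support, 2 ≤ G.deg v)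
    (hx : G.IsInside f a b x) (hu : G.Adj x u) (hux : f u < f x) :
    ∃ v, f x < f v ∧ G.neighborSet x = {u, v} ∧ (v = b ∨ G.IsInside f a b v) := by
  obtain ⟨u', v, hu', hv, hN⟩ := h.exists_neighborSet_eq_pair hf h2 hx
  obtain rfl : u = u' := h.eq_of_adj_of_gt hf hx hu (adj_of_neighborSet_eq_pair hN).1 hux hu'
  refine ⟨v, hv, hN, ?_⟩
  rcases h.eq_or_eq_or_isInside_of_adj hf hx (adj_of_neighborSet_eq_pair hN).2 with rfl | hv'
  · exact absurd hv hx.2.1.asymm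
  · exact hv'

theorem exists_configuration [Finite V] (h : G.IsInnermostEdge f a b) (hf : G.IsBookEmbedding f)
    (h2 : ∀ v ∈ G.support, 2 ≤ G.deg v) :
    (∃ x, G.neighborSet x = {a, b}) ∨
      (∃ x₁ x₂, G.neighborSet x₁ = {a, x₂} ∧ G.neighborSet x₂ = {x₁, b}) ∨
      ∃ x₁ x₂ x₃ c, G.neighborSet x₁ = {a, x₂} ∧ G.neighborSet x₂ = {x₁, x₃} ∧
        G.neighborSet x₃ = {x₂, c} := by
  obtain ⟨x₁, hx₁, hmin⟩ :=
    Set.exists_min_image {x | G.IsInside f a b x} f (Set.toFinite _) h.exists_isInside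
  obtain ⟨u, v, hu, -, hN⟩ := h.exists_neighborSet_eq_pair hf h2 hx₁
  have hua : u = a := by
    rcases h.eq_or_eq_or_isInside_of_adj hf hx₁ (adj_of_neighborSet_eq_pair hN).1 with
      hua | rfl | hin
    · exact hua
    · exact absurd (hu.trans hx₁.2.2) (lt_irrefl _)
    · exact absurd (hmin u hin) hu.not_ge
  subst hua
  obtain ⟨x₂, hlt₁, h₁, rfl | hx₂⟩ :=
    h.exists_neighborSet_eq_pair_of_adj hf h2 hx₁ (adj_of_neighborSet_eq_pair hN).1 hu
  · exact Or.inl ⟨x₁, h₁⟩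
  obtain ⟨x₃, hlt₂, h₂, rfl | hx₃⟩ :=
    h.exists_neighborSet_eq_pair_of_adj hf h2 hx₂ (adj_of_neighborSet_eq_pair h₁).2.symm hlt₁
  · exact Or.inr (Or.inl ⟨x₁, x₂, h₁, h₂⟩)
  obtain ⟨c, -, h₃, -⟩ :=
    h.exists_neighborSet_eq_pair_of_adj hf h2 hx₃ (adj_of_neighborSet_eq_pair h₂).2.symm hlt₂
  exact Or.inr (Or.inr ⟨x₁, x₂, x₃, c, h₁, h₂, h₃⟩)

end IsInnermostEdge

theorem IsOuterplanar.exists_square_degIn_le [Finite V] (hk : 3 ≤ k) (hout : G.IsOuterplanar)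
    (hdeg : ∀ v, G.deg v ≤ k) (hs : s.Nonempty) :
    ∃ v ∈ s, G.square.degIn s v ≤ 2 * k - 2 := by
  induction G using WellFoundedLT.induction with
  | _ G ih =>
  have reduce : G.IsSquareReducible s k → ∃ v ∈ s, G.square.degIn s v ≤ 2 * k - 2 := by
    rintro (hv | ⟨x, y, hxy⟩)
    · exact hv
    obtain ⟨v, hv, hle⟩ := ih _ (deleteEdges_singleton_lt hxy.1) (hout.mono (deleteEdges_le _))
      fun v => (deg_mono (deleteEdges_le _) v).trans (hdeg v)
    exact ⟨v, hv, (hxy.degIn_square_le hv).trans hle⟩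
  by_cases hlow : ∃ v ∈ s, G.deg v ≤ 1
  · obtain ⟨v, hv, hv1⟩ := hlow
    exact ⟨v, hv, degIn_le_deg.trans ((square_deg_le_of_deg_le_one hdeg hv1).trans (by omega))⟩
  push Not at hlow
  by_cases hleaf : ∃ x y, G.neighborSet x = {y}
  · obtain ⟨x, y, hx⟩ := hleaf
    have hxs : x ∉ s := fun hxs => by
      have := hlow x hxs
      rw [deg, hx, Set.ncard_singleton] at this
      omega
    exact reduce (Or.inr ⟨x, y, isSquareRemovable_of_neighborSet_eq_singleton hx hxs⟩)
  push Not at hleaf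
  have h2 (v : V) (hv : v ∈ G.support) : 2 ≤ G.deg v := by
    have := mem_support_iff_deg_pos.mp hv
    have : G.deg v ≠ 1 := fun h1 => (Set.ncard_eq_one.mp h1).elim (hleaf v)
    omega
  obtain ⟨v, hv⟩ := hs
  obtain ⟨f, hf⟩ := hout
  obtain ⟨a, b, hab⟩ := exists_isInnermostEdge hf.1 h2
    ⟨v, mem_support_iff_deg_pos.mpr (by have := hlow v hv; omega)⟩
  rcases hab.exists_configuration hf h2 with
    ⟨x, hx⟩ | ⟨x₁, x₂, h₁, h₂⟩ | ⟨x₁, x₂, x₃, c, h₁, h₂, h₃⟩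
  · exact reduce (isSquareReducible_of_triangle hdeg hx hab.adj)
  · exact reduce (isSquareReducible_of_quadrilateral hk hdeg h₁ h₂ hab.adj)
  · exact reduce (isSquareReducible_of_path hk hdeg h₁ h₂ h₃)

end SimpleGraph

/-- For a finite outerplanar graph `G` with maximum degree `Δ = k`,
`k ∈ {3,4}`, we have `ind(G²) ≤ 2k - 2`: every nonempty induced subgraph of `G²`
contains a vertex of degree at most `2k - 2` in that subgraph. -/
theorem stmt3 {V : Type*} [Fintype V] (G : SimpleGraph V) (k : ℕ)
    (hk : k = 3 ∨ k = 4) (hout : G.IsOuterplanar) (hΔ : G.maxDeg = k) :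
    ∀ s : Finset V, s.Nonempty → ∃ v ∈ s, G.square.degIn s v ≤ 2 * k - 2 :=
  fun _ hs => hout.exists_square_degIn_le (by omega)
    (fun v => hΔ ▸ Finset.le_sup (f := G.deg) (Finset.mem_univ v)) hs
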